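/- arXiv:2112.13325 — 2 statements merged into one kernel-verified Lean document; each statement's English description precedes it below -/
import Mathlib

section
/- Let l ≥ 1 be an integer and γ ∈ (0, 2l) real. Define c₁ = l/(2l-γ) and c_{k+1} = -γ(l-k)c_k/(2l-γ) for 1 ≤ k ≤ l-1, with c_k = 0 for k > l. Then b_k(s) := c_k s^{-k} solves, for all s > 0 and all 1 ≤ k ≤ l (with b_{l+1} := 0): b_k'(s) + (2k-γ) b₁(s) b_k(s) - b_{k+1}(s) = 0. -/
/-! With `b_k = c_k s^{-k}`, the `k`-th equation is `s^{-k-1}` times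
`-k c_k + (2k - γ) c₁ c_k - c_{k+1}`. For `c₁ = l / (2l - γ)` this vanishes exactly when
`c_{k+1} = -γ (l - k) c_k / (2l - γ)`, which for `k = l` holds because both sides are zero. -/

lemma hasDerivAt_const_div_pow (a : ℝ) (k : ℕ) {s : ℝ} (hs : s ≠ 0) :
    HasDerivAt (fun t => a / t ^ k) (-(k * a) / s ^ (k + 1)) s := by
  refine ((hasDerivAt_const s a).fun_div (hasDerivAt_pow k s) (pow_ne_zero k hs)).congr_deriv ?_
  rcases k with _ | k
  · simp
  · rw [Nat.add_sub_cancel]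
    field_simp
    ring

lemma coeff_balance {l k : ℕ} {γ : ℝ} (hγ : 2 * (l : ℝ) - γ ≠ 0) (c : ℕ → ℝ)
    (hc1 : c 1 = (l : ℝ) / (2 * l - γ))
    (hstep : c (k + 1) = -(γ * ((l : ℝ) - k) / (2 * l - γ)) * c k) :
    -(k * c k) + (2 * (k : ℝ) - γ) * c 1 * c k - c (k + 1) = 0 := by
  rw [hstep, hc1]
  field_simp
  ring

theorem stmt13_general (l : ℕ) (γ : ℝ) (hγ2 : γ < 2 * l)
    (c : ℕ → ℝ) (hc1 : c 1 = (l : ℝ) / (2 * l - γ))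
    (hrec : ∀ k : ℕ, 1 ≤ k → k ≤ l - 1 →
      c (k + 1) = -(γ * ((l : ℝ) - k) / (2 * l - γ)) * c k)
    (hzero : ∀ k : ℕ, l < k → c k = 0) :
    ∀ s : ℝ, 0 < s → ∀ k : ℕ, 1 ≤ k → k ≤ l →
      deriv (fun t => c k / t ^ k) s
        + (2 * (k : ℝ) - γ) * (c 1 / s ^ 1) * (c k / s ^ k)
        - c (k + 1) / s ^ (k + 1) = 0 := by
  intro s hs k hk1 hkl
  have hstep : c (k + 1) = -(γ * ((l : ℝ) - k) / (2 * l - γ)) * c k := by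
    rcases hkl.lt_or_eq with hlt | rfl
    · exact hrec k hk1 (by omega)
    · simp [hzero (k + 1) (by omega)]
  have hbalance := coeff_balance (by linarith) c hc1 hstep
  rw [(hasDerivAt_const_div_pow (c k) k hs.ne').deriv]
  calc -(k * c k) / s ^ (k + 1) + (2 * (k : ℝ) - γ) * (c 1 / s ^ 1) * (c k / s ^ k)
        - c (k + 1) / s ^ (k + 1)
      = (-(k * c k) + (2 * (k : ℝ) - γ) * c 1 * c k - c (k + 1)) / s ^ (k + 1) := by
        field_simp
        ring
    _ = 0 := by rw [hbalance, zero_div]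

theorem stmt13 (l : ℕ) (hl : 1 ≤ l) (γ : ℝ) (hγ : 0 < γ) (hγ2 : γ < 2 * l)
    (c : ℕ → ℝ) (hc1 : c 1 = (l : ℝ) / (2 * l - γ))
    (hrec : ∀ k : ℕ, 1 ≤ k → k ≤ l - 1 →
      c (k + 1) = -(γ * ((l : ℝ) - k) / (2 * l - γ)) * c k)
    (hzero : ∀ k : ℕ, l < k → c k = 0) :
    ∀ s : ℝ, 0 < s → ∀ k : ℕ, 1 ≤ k → k ≤ l →
      deriv (fun t => c k / t ^ k) s
        + (2 * (k : ℝ) - γ) * (c 1 / s ^ 1) * (c k / s ^ k)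
        - c (k + 1) / s ^ (k + 1) = 0 :=
  stmt13_general l γ hγ2 c hc1 hrec hzero
end

section
/- Let l ≥ 1 integer, γ ∈ (0,2l), c_k as above (c₁ = l/(2l-γ), c_{k+1} = -γ(l-k)c_k/(2l-γ)). Define the l×l matrix A_l by: a_{1,1} = γ(l-1)/(2l-γ) - (2-γ)c₁; a_{i,i} = γ(l-i)/(2l-γ) for 2 ≤ i ≤ l; a_{i,i+1} = 1 for 1 ≤ i ≤ l-1; a_{i,1} = -(2i-γ)c_i for 2 ≤ i ≤ l; all other entries 0. Then the eigenvalues of A_l are exactly {-1} ∪ {kγ/(2l-γ) : 2 ≤ k ≤ l}, i.e., A_l is diagonalizable with A_l = P⁻¹ D P where D = diag(-1, 2γ/(2l-γ), 3γ/(2l-γ), …, lγ/(2l-γ)). -/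
/-!
For a matrix with diagonal `d`, ones just above it and an extra first column `v`, the row
vector `p(μ)` with `p_j = ∏_{m > j} (μ - d_m)` satisfies every column of `p A = μ p` except the
first, and the first one holds exactly when `μ` is a root of `∏_m (μ - d_m) - ∑_i p_i(μ) v_i`,
the characteristic polynomial of `A` expanded along its first column.

For the linearised modulation matrix the recurrence of `c` makes the tails telescope:
`∑_{j ≥ i} p_j v_j = (v_i μ + γ c_{i+1}) ∏_{i ≤ m < l-2} (μ - d_m)`, by downward induction on `i`.
At `i = 0` this identifies the characteristic polynomial as `∏_r (μ - μ_r)` with `μ_r` the claimed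
eigenvalues. The vectors `p(μ_r)` are left eigenvectors for distinct eigenvalues, hence the rows
of an invertible `P` with `P A = D P`.
-/

open Finset Matrix

theorem Matrix.isUnit_and_eq_inv_mul_diagonal_mul_of_vecMul_eq_smul {n K : Type*} [Fintype n]
    [DecidableEq n] [Field K] {A P : Matrix n n K} {μ : n → K} (hμ : Function.Injective μ)
    (hP : ∀ r, P r ≠ 0) (hPA : ∀ r, P r ᵥ* A = μ r • P r) :
    IsUnit P ∧ A = P⁻¹ * diagonal μ * P := by
  have hunit : IsUnit P := linearIndependent_rows_iff_isUnit.mp <|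
    Module.End.eigenvectors_linearIndependent' A.vecMulLinear μ hμ P fun r =>
      ⟨Module.End.mem_eigenspace_iff.mpr (hPA r), hP r⟩
  refine ⟨hunit, ?_⟩
  have hdiag : P * A = diagonal μ * P := by
    ext r j
    rw [mul_apply_eq_vecMul, hPA r, diagonal_mul]
    rfl
  rw [Matrix.mul_assoc, ← hdiag]
  exact (nonsing_inv_mul_cancel_left P A ((isUnit_iff_isUnit_det P).mp hunit)).symm

section Bidiagonal

variable {K : Type*} [CommRing K]

def bidiagAddFirstCol (l : ℕ) (d v : ℕ → K) : Matrix (Fin l) (Fin l) K :=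
  of fun i j => (if i = j then d i else 0) + (if (j : ℕ) = i + 1 then 1 else 0) +
    (if (j : ℕ) = 0 then v i else 0)

def bidiagLeftEigvec (l : ℕ) (d : ℕ → K) (μ : K) (j : ℕ) : K :=
  ∏ m ∈ Ico (j + 1) l, (μ - d m)

variable {l j : ℕ} {d v : ℕ → K} {μ : K}

theorem bidiagLeftEigvec_of_lt (h : j + 1 < l) :
    bidiagLeftEigvec l d μ j = (μ - d (j + 1)) * bidiagLeftEigvec l d μ (j + 1) :=
  prod_eq_prod_Ico_succ_bot h _

theorem bidiagLeftEigvec_of_succ_eq (h : j + 1 = l) : bidiagLeftEigvec l d μ j = 1 := by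
  rw [bidiagLeftEigvec, h, Ico_self, prod_empty]

theorem prod_range_eq_mul_bidiagLeftEigvec_zero (hl : 0 < l) :
    ∏ m ∈ range l, (μ - d m) = (μ - d 0) * bidiagLeftEigvec l d μ 0 := by
  rw [range_eq_Ico, prod_eq_prod_Ico_succ_bot hl]; rfl

theorem vecMul_bidiagAddFirstCol
    (h : ∑ i ∈ range l, bidiagLeftEigvec l d μ i * v i = ∏ m ∈ range l, (μ - d m)) :
    (fun j : Fin l => bidiagLeftEigvec l d μ j) ᵥ* bidiagAddFirstCol l d v =
      μ • fun j : Fin l => bidiagLeftEigvec l d μ j := by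
  ext ⟨j, hj⟩
  simp only [vecMul, dotProduct, bidiagAddFirstCol, of_apply, mul_add, sum_add_distrib,
    Pi.smul_apply, smul_eq_mul, mul_ite, mul_zero, mul_one]
  rw [sum_ite_eq' univ, if_pos (mem_univ _),
    Fin.sum_univ_eq_sum_range (fun i => if j = i + 1 then bidiagLeftEigvec l d μ i else 0),
    Fin.sum_univ_eq_sum_range (fun i => if j = 0 then bidiagLeftEigvec l d μ i * v i else 0)]
  rcases j with _ | k
  · simp only [Nat.zero_ne_add_one, if_false, sum_const_zero, if_true, h,
      prod_range_eq_mul_bidiagLeftEigvec_zero hj]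
    ring
  · simp only [Nat.add_right_cancel_iff, sum_ite_eq, mem_range, Nat.succ_ne_zero, if_false,
      sum_const_zero, add_zero, if_pos (Nat.lt_of_succ_lt hj), bidiagLeftEigvec_of_lt hj]
    ring

end Bidiagonal

section Modulation

noncomputable def modulationDiag (l : ℕ) (γ : ℝ) (m : ℕ) : ℝ :=
  γ * ((l : ℝ) - (m + 1)) / (2 * l - γ)

noncomputable def modulationCol (γ : ℝ) (c : ℕ → ℝ) (i : ℕ) : ℝ :=
  -(2 * ((i : ℝ) + 1) - γ) * c (i + 1)

noncomputable def modulationEigenvalue (l : ℕ) (γ : ℝ) (r : ℕ) : ℝ :=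
  if r = 0 then -1 else ((r : ℝ) + 1) * γ / (2 * l - γ)

theorem modulation_matrix_eq_bidiagAddFirstCol (l : ℕ) (γ : ℝ) (c : ℕ → ℝ) :
    (fun i j : Fin l =>
      if (i : ℕ) = 0 ∧ (j : ℕ) = 0 then γ * ((l : ℝ) - 1) / (2 * l - γ) - (2 - γ) * c 1
      else if i = j then γ * ((l : ℝ) - ((i : ℕ) + 1)) / (2 * l - γ)
      else if (j : ℕ) = (i : ℕ) + 1 then 1
      else if (j : ℕ) = 0 then -(2 * (((i : ℕ) : ℝ) + 1) - γ) * c ((i : ℕ) + 1)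
      else 0) = bidiagAddFirstCol l (modulationDiag l γ) (modulationCol γ c) := by
  ext ⟨i, hi⟩ ⟨j, hj⟩
  simp only [bidiagAddFirstCol, of_apply, modulationDiag, modulationCol, Fin.ext_iff]
  split_ifs <;> first | omega | (subst_vars; push_cast; ring)

theorem modulationEigenvalue_injective {l : ℕ} {γ : ℝ} (hγ : γ ≠ 0) (hβ : 2 * (l : ℝ) - γ ≠ 0)
    (hdist : ∀ k : ℕ, 2 ≤ k → k ≤ l → (k : ℝ) * γ / (2 * (l : ℝ) - γ) ≠ -1) :
    Function.Injective fun r : Fin l => modulationEigenvalue l γ r := by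
  intro r s h
  simp only [modulationEigenvalue] at h
  split_ifs at h with hr hs hs
  · exact Fin.ext (hr.trans hs.symm)
  · exact absurd h.symm (by exact_mod_cast hdist (s + 1) (by omega) (by omega))
  · exact absurd h (by exact_mod_cast hdist (r + 1) (by omega) (by omega))
  · field_simp at h
    exact Fin.ext (by exact_mod_cast add_right_cancel h)

variable {n : ℕ} {γ μ : ℝ} {c : ℕ → ℝ}

theorem sum_Ico_bidiagLeftEigvec_mul_modulationCol (hβ : 2 * ((n + 2 : ℕ) : ℝ) - γ ≠ 0)
    (hc : ∀ i ≤ n, c (i + 2) = -modulationDiag (n + 2) γ i * c (i + 1)) {i : ℕ} (hi : i ≤ n) :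
    ∑ j ∈ Ico i (n + 2), bidiagLeftEigvec (n + 2) (modulationDiag (n + 2) γ) μ j *
        modulationCol γ c j =
      (modulationCol γ c i * μ + γ * c (i + 1)) *
        ∏ m ∈ Ico i n, (μ - modulationDiag (n + 2) γ m) := by
  obtain ⟨k, hk⟩ := Nat.exists_eq_add_of_le' hi
  induction k generalizing i with
  | zero =>
    obtain rfl : n = i := by omega
    rw [sum_Ico_succ_top (by omega), sum_Ico_succ_top le_rfl, Ico_self, sum_empty, prod_empty,
      zero_add, bidiagLeftEigvec_of_lt (by omega), bidiagLeftEigvec_of_succ_eq rfl,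
      modulationCol, modulationCol, hc n le_rfl]
    simp only [modulationDiag]
    push_cast at hβ ⊢
    field_simp
    ring
  | succ k ih =>
    rw [sum_eq_sum_Ico_succ_bot (by omega), ih (by omega) (by omega),
      prod_eq_prod_Ico_succ_bot (show i < n by omega), bidiagLeftEigvec,
      ← prod_Ico_consecutive _ (show i + 1 ≤ n by omega) (show n ≤ n + 2 by omega),
      prod_Ico_succ_top (by omega), prod_Ico_succ_top le_rfl, Ico_self, prod_empty,
      modulationCol, modulationCol, hc i (by omega)]
    generalize ∏ m ∈ Ico (i + 1) n, (μ - modulationDiag (n + 2) γ m) = Q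
    simp only [modulationDiag]
    push_cast at hβ ⊢
    field_simp
    ring

theorem prod_range_sub_modulationDiag :
    ∏ m ∈ range n, (μ - modulationDiag (n + 2) γ m) =
      ∏ r ∈ range n, (μ - modulationEigenvalue (n + 2) γ (r + 1)) := by
  rw [← prod_range_reflect]
  refine prod_congr rfl fun m hm => ?_
  rw [mem_range] at hm
  simp only [modulationDiag, modulationEigenvalue, Nat.succ_ne_zero, if_false,
    Nat.cast_sub (by omega : m ≤ n - 1), Nat.cast_sub (by omega : 1 ≤ n)]
  push_cast
  ring

theorem prod_sub_modulationDiag_sub_sum (hβ : 2 * ((n + 2 : ℕ) : ℝ) - γ ≠ 0)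
    (hc1 : c 1 = ((n + 2 : ℕ) : ℝ) / (2 * ((n + 2 : ℕ) : ℝ) - γ))
    (hc : ∀ i ≤ n, c (i + 2) = -modulationDiag (n + 2) γ i * c (i + 1)) :
    ∏ m ∈ range (n + 2), (μ - modulationDiag (n + 2) γ m) -
        ∑ i ∈ range (n + 2), bidiagLeftEigvec (n + 2) (modulationDiag (n + 2) γ) μ i *
          modulationCol γ c i =
      ∏ r ∈ range (n + 2), (μ - modulationEigenvalue (n + 2) γ r) := by
  rw [range_eq_Ico, sum_Ico_bidiagLeftEigvec_mul_modulationCol hβ hc (Nat.zero_le n),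
    ← range_eq_Ico, prod_range_succ, prod_range_succ, prod_range_succ, prod_range_succ',
    ← prod_range_sub_modulationDiag, range_eq_Ico]
  generalize ∏ m ∈ Ico 0 n, (μ - modulationDiag (n + 2) γ m) = Q
  simp only [modulationDiag, modulationCol, modulationEigenvalue, hc1]
  push_cast at hβ ⊢
  field_simp
  ring

end Modulation

theorem stmt14 (l : ℕ) (hl : 2 ≤ l) (γ : ℝ) (hγ : 0 < γ) (hγ2 : γ < 2 * l)
    (hdist : ∀ k : ℕ, 2 ≤ k → k ≤ l → (k : ℝ) * γ / (2 * (l : ℝ) - γ) ≠ -1)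
    (c : ℕ → ℝ) (hc1 : c 1 = (l : ℝ) / (2 * l - γ))
    (hrec : ∀ k : ℕ, 1 ≤ k → k ≤ l - 1 →
      c (k + 1) = -(γ * ((l : ℝ) - k) / (2 * l - γ)) * c k) :
    let A : Matrix (Fin l) (Fin l) ℝ := fun i j =>
      if (i : ℕ) = 0 ∧ (j : ℕ) = 0 then γ * ((l : ℝ) - 1) / (2 * l - γ) - (2 - γ) * c 1
      else if i = j then γ * ((l : ℝ) - ((i : ℕ) + 1)) / (2 * l - γ)
      else if (j : ℕ) = (i : ℕ) + 1 then 1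
      else if (j : ℕ) = 0 then -(2 * (((i : ℕ) : ℝ) + 1) - γ) * c ((i : ℕ) + 1)
      else 0
    let D : Matrix (Fin l) (Fin l) ℝ :=
      Matrix.diagonal (fun i => if (i : ℕ) = 0 then -1 else (((i : ℕ) : ℝ) + 1) * γ / (2 * l - γ))
    ∃ P : Matrix (Fin l) (Fin l) ℝ, IsUnit P ∧ A = P⁻¹ * D * P := by
  intro A D
  obtain ⟨n, rfl⟩ : ∃ n, l = n + 2 := ⟨l - 2, by omega⟩
  have hβ : 2 * ((n + 2 : ℕ) : ℝ) - γ ≠ 0 := by linarith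
  have hc : ∀ i ≤ n, c (i + 2) = -modulationDiag (n + 2) γ i * c (i + 1) := fun i hi => by
    rw [hrec (i + 1) (by omega) (by omega), modulationDiag]
    push_cast
    ring
  have hA : A = bidiagAddFirstCol (n + 2) (modulationDiag (n + 2) γ) (modulationCol γ c) :=
    modulation_matrix_eq_bidiagAddFirstCol _ _ _
  have hrow (μ : ℝ) (hμ : ∏ r ∈ range (n + 2), (μ - modulationEigenvalue (n + 2) γ r) = 0) :
      (fun j : Fin (n + 2) => bidiagLeftEigvec (n + 2) (modulationDiag (n + 2) γ) μ j) ᵥ* A =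
        μ • fun j : Fin (n + 2) => bidiagLeftEigvec (n + 2) (modulationDiag (n + 2) γ) μ j := by
    rw [hA]
    refine vecMul_bidiagAddFirstCol (sub_eq_zero.mp ?_).symm
    rwa [prod_sub_modulationDiag_sub_sum hβ hc1 hc]
  exact ⟨_, isUnit_and_eq_inv_mul_diagonal_mul_of_vecMul_eq_smul
    (modulationEigenvalue_injective hγ.ne' hβ hdist)
    (fun r hr => one_ne_zero <| (bidiagLeftEigvec_of_succ_eq rfl).symm.trans
      (congrFun hr (Fin.last (n + 1))))
    (fun r => hrow _ (prod_eq_zero (mem_range.2 r.2) (sub_self _)))⟩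
end
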